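/- Let κ ∈ ℂ with κ ∉ ℝ, 0 < |κ| < 1, κ = ρe^{2πip/q} with gcd(p,q)=1 and q odd, and suppose β := ρ^{−q} ≤ 2. Then the attractor A_κ = { Σ_{k≥0} a_k κ^k : a_k ∈ {−1,+1} } is a convex polygon; specifically, A_κ equals the Minkowski sum J + κJ + κ²J + ⋯ + κ^{q−1}J, where J = [−β/(β−1), β/(β−1)] · (as a subset of ℝ ⊂ ℂ). -/

import Mathlib

/-!
Since `κ ^ q = ρ ^ q =: c` is real, regrouping `∑ a_k κ^k` along the residues mod `q` writes it
as `∑_{i<q} x_i κ^i` with `x_i = ∑_m a_{i+qm} c^m ∈ J = [-(1-c)⁻¹, (1-c)⁻¹]`. Conversely, when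
`c ≥ 1/2` (that is, `β ≤ 2`), every point of `J` has a `±1` expansion in base `β = c⁻¹`, found
greedily by taking the sign of the current remainder as the next digit; interleaving the
expansions of `x_0, …, x_{q-1}` gives back a `±1` sequence. A sum of segments is convex.
-/

open Complex Finset Filter Topology

theorem tsum_eq_sum_range_tsum_add_mul {R : Type*} [AddCommGroup R] [UniformSpace R]
    [IsUniformAddGroup R] [CompleteSpace R] [T0Space R] {f : ℕ → R} (hf : Summable f)
    {q : ℕ} (hq : 0 < q) :
    ∑' n, f n = ∑ i ∈ range q, ∑' m, f (i + q * m) := by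
  obtain ⟨n, rfl⟩ := Nat.exists_eq_add_one_of_ne_zero hq.ne'
  rw [Nat.sumByResidueClasses hf (n + 1), ← Fin.sum_univ_eq_sum_range]
  -- `ZMod (n + 1)` is `Fin (n + 1)` by definition, with `ZMod.val = Fin.val`.
  rfl

namespace SignedExpansion

noncomputable def digit (t : ℝ) : ℝ := if 0 ≤ t then 1 else -1

lemma digit_eq_one_or_neg_one (t : ℝ) : digit t = 1 ∨ digit t = -1 := by
  unfold digit; split_ifs <;> simp

lemma abs_digit (t : ℝ) : |digit t| = 1 := by
  rcases digit_eq_one_or_neg_one t with h | h <;> simp [h]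

lemma abs_sub_digit_le {t M : ℝ} (hM : 2 ≤ M) (ht : |t| ≤ M) : |t - digit t| ≤ M - 1 := by
  rw [abs_le] at ht ⊢
  unfold digit
  split_ifs <;> constructor <;> linarith

noncomputable def remainder (c x : ℝ) : ℕ → ℝ
  | 0 => x
  | n + 1 => (remainder c x n - digit (remainder c x n)) / c

variable {c x : ℝ}

lemma abs_remainder_le (hc : 1 / 2 ≤ c) (hc1 : c < 1) (hx : |x| ≤ (1 - c)⁻¹) (n : ℕ) :
    |remainder c x n| ≤ (1 - c)⁻¹ := by
  -- `M = (1 - c)⁻¹` satisfies `M - 1 = c * M`, and `2 ≤ M` is exactly `1 / 2 ≤ c`.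
  induction n with
  | zero => exact hx
  | succ n ih =>
    have hc0 : 0 < c := by linarith
    have hM : 2 ≤ (1 - c)⁻¹ := by
      rw [le_inv_comm₀ two_pos (by linarith)]; linarith
    rw [remainder, abs_div, abs_of_pos hc0, div_le_iff₀ hc0]
    calc |remainder c x n - digit (remainder c x n)| ≤ (1 - c)⁻¹ - 1 := abs_sub_digit_le hM ih
      _ = (1 - c)⁻¹ * c := by field_simp [show 1 - c ≠ 0 by linarith]; ring

lemma sub_sum_digit_remainder (hc : c ≠ 0) (x : ℝ) (n : ℕ) :
    x - ∑ j ∈ range n, digit (remainder c x j) * c ^ j = c ^ n * remainder c x n := by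
  induction n with
  | zero => simp [remainder]
  | succ n ih =>
    rw [sum_range_succ, ← sub_sub, ih, remainder, pow_succ]
    field_simp

theorem hasSum_digit_remainder (hc : 1 / 2 ≤ c) (hc1 : c < 1) (hx : |x| ≤ (1 - c)⁻¹) :
    HasSum (fun j => digit (remainder c x j) * c ^ j) x := by
  have hc0 : 0 ≤ c := by linarith
  have hnorm : ∀ j, ‖digit (remainder c x j) * c ^ j‖ = c ^ j := fun j => by
    rw [norm_mul, Real.norm_eq_abs, abs_digit, one_mul, norm_pow, Real.norm_of_nonneg hc0]
  rw [hasSum_iff_tendsto_nat_of_summable_norm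
    (by simpa only [hnorm] using summable_geometric_of_lt_one hc0 hc1)]
  have hrem : Tendsto (fun n => c ^ n * remainder c x n) atTop (𝓝 0) := by
    have hbound : Tendsto (fun n => c ^ n * (1 - c)⁻¹) atTop (𝓝 0) := by
      simpa using (tendsto_pow_atTop_nhds_zero_of_lt_one hc0 hc1).mul_const (1 - c)⁻¹
    refine squeeze_zero_norm (fun n => ?_) hbound
    rw [norm_mul, norm_pow, Real.norm_of_nonneg hc0, Real.norm_eq_abs]
    exact mul_le_mul_of_nonneg_left (abs_remainder_le hc hc1 hx n) (pow_nonneg hc0 n)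
  have hpartial : ∀ n, ∑ j ∈ range n, digit (remainder c x j) * c ^ j =
      x - c ^ n * remainder c x n := fun n => by
    rw [← sub_sum_digit_remainder (by linarith) x n, sub_sub_cancel]
  simpa only [hpartial, sub_zero] using hrem.const_sub x

end SignedExpansion

open SignedExpansion

theorem norm_ofReal_mul_exp_two_pi_I_div {ρ : ℝ} (hρ : 0 ≤ ρ) (p q : ℕ) :
    ‖(ρ : ℂ) * exp (2 * Real.pi * I * p / q)‖ = ρ := by
  rw [norm_mul, norm_real, Real.norm_of_nonneg hρ, norm_exp]
  simp

theorem ofReal_mul_exp_two_pi_I_div_pow (ρ : ℝ) (p : ℕ) {q : ℕ} (hq : q ≠ 0) :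
    ((ρ : ℂ) * exp (2 * Real.pi * I * p / q)) ^ q = ((ρ ^ q : ℝ) : ℂ) := by
  rw [mul_pow, ← exp_nat_mul, mul_div_cancel₀ _ (Nat.cast_ne_zero.mpr hq),
    mul_comm _ (p : ℂ), exp_nat_mul_two_pi_mul_I, mul_one, ofReal_pow]

theorem abs_tsum_mul_pow_le {c : ℝ} (hc0 : 0 ≤ c) (hc1 : c < 1) {a : ℕ → ℝ}
    (ha : ∀ k, |a k| ≤ 1) : |∑' k, a k * c ^ k| ≤ (1 - c)⁻¹ :=
  Real.norm_eq_abs (∑' k, a k * c ^ k) ▸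
    tsum_of_norm_bounded (hasSum_geometric_of_lt_one hc0 hc1) fun k => by
    rw [norm_mul, norm_pow, Real.norm_of_nonneg hc0, Real.norm_eq_abs]
    exact mul_le_of_le_one_left (pow_nonneg hc0 k) (ha k)

theorem tsum_ofReal_mul_pow_eq_sum_range {q : ℕ} (hq : 0 < q) {κ : ℂ} (hκ : ‖κ‖ < 1) {c : ℝ}
    (hκc : κ ^ q = c) {a : ℕ → ℝ} (ha : ∀ k, |a k| ≤ 1) :
    ∑' k, (a k : ℂ) * κ ^ k =
      ∑ i ∈ range q, ((∑' m, a (i + q * m) * c ^ m : ℝ) : ℂ) * κ ^ i := by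
  have hs : Summable fun k => (a k : ℂ) * κ ^ k :=
    Summable.of_norm_bounded (summable_geometric_of_lt_one (norm_nonneg κ) hκ) fun k => by
      rw [norm_mul, norm_pow, norm_real, Real.norm_eq_abs]
      exact mul_le_of_le_one_left (pow_nonneg (norm_nonneg κ) k) (ha k)
  rw [tsum_eq_sum_range_tsum_add_mul hs hq]
  refine sum_congr rfl fun i _ => ?_
  rw [ofReal_tsum, ← tsum_mul_right]
  refine tsum_congr fun m => ?_
  rw [pow_add, pow_mul, hκc]
  push_cast
  ring

theorem convex_setOf_sum_range_ofReal_mul {s : Set ℝ} (hs : Convex ℝ s) (q : ℕ) (w : ℕ → ℂ) :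
    Convex ℝ {z : ℂ | ∃ x : ℕ → ℝ, (∀ i < q, x i ∈ s) ∧ z = ∑ i ∈ range q, (x i : ℂ) * w i} := by
  rintro _ ⟨x, hx, rfl⟩ _ ⟨y, hy, rfl⟩ t u ht hu htu
  refine ⟨fun i => t * x i + u * y i, fun i hi => hs (hx i hi) (hy i hi) ht hu htu, ?_⟩
  simp only [smul_sum, ← sum_add_distrib, real_smul]
  refine sum_congr rfl fun i _ => ?_
  push_cast
  ring

theorem exists_Icc_sum_range_eq_signed_tsum {q : ℕ} (hq : 0 < q) {κ : ℂ} (hκ : ‖κ‖ < 1) {c : ℝ}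
    (hc0 : 0 ≤ c) (hc1 : c < 1) (hκc : κ ^ q = c) {a : ℕ → ℝ} (ha : ∀ k, a k = 1 ∨ a k = -1) :
    ∃ x : ℕ → ℝ, (∀ i < q, x i ∈ Set.Icc (-(1 - c)⁻¹) (1 - c)⁻¹) ∧
      ∑' k, (a k : ℂ) * κ ^ k = ∑ i ∈ range q, (x i : ℂ) * κ ^ i := by
  have ha' : ∀ k, |a k| ≤ 1 := fun k => by rcases ha k with h | h <;> simp [h]
  exact ⟨fun i => ∑' m, a (i + q * m) * c ^ m,
    fun i _ => abs_le.mp (abs_tsum_mul_pow_le hc0 hc1 fun m => ha' _),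
    tsum_ofReal_mul_pow_eq_sum_range hq hκ hκc ha'⟩

theorem exists_signed_tsum_eq_sum_range_of_Icc {q : ℕ} (hq : 0 < q) {κ : ℂ} (hκ : ‖κ‖ < 1) {c : ℝ}
    (hc : 1 / 2 ≤ c) (hc1 : c < 1) (hκc : κ ^ q = c) {x : ℕ → ℝ}
    (hx : ∀ i < q, x i ∈ Set.Icc (-(1 - c)⁻¹) (1 - c)⁻¹) :
    ∃ a : ℕ → ℝ, (∀ k, a k = 1 ∨ a k = -1) ∧
      ∑ i ∈ range q, (x i : ℂ) * κ ^ i = ∑' k, (a k : ℂ) * κ ^ k := by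
  refine ⟨fun k => digit (remainder c (x (k % q)) (k / q)),
    fun k => digit_eq_one_or_neg_one _, ?_⟩
  rw [tsum_ofReal_mul_pow_eq_sum_range hq hκ hκc fun k => (abs_digit _).le]
  refine sum_congr rfl fun i hi => ?_
  have hiq : i < q := mem_range.mp hi
  have hmod (m : ℕ) : (i + q * m) % q = i := by
    rw [Nat.add_mul_mod_self_left, Nat.mod_eq_of_lt hiq]
  have hdiv (m : ℕ) : (i + q * m) / q = m := by
    rw [Nat.add_mul_div_left _ _ hq, Nat.div_eq_of_lt hiq, zero_add]
  simp only [hmod, hdiv, (hasSum_digit_remainder hc hc1 (abs_le.mpr (hx i hiq))).tsum_eq]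

theorem setOf_signed_tsum_eq_polygon {q : ℕ} (hq : 0 < q) {κ : ℂ} (hκ : ‖κ‖ < 1) {c : ℝ}
    (hc : 1 / 2 ≤ c) (hc1 : c < 1) (hκc : κ ^ q = c) :
    {z : ℂ | ∃ a : ℕ → ℝ, (∀ k, a k = 1 ∨ a k = -1) ∧ z = ∑' k, (a k : ℂ) * κ ^ k} =
      {z | ∃ x : ℕ → ℝ, (∀ i < q, x i ∈ Set.Icc (-(1 - c)⁻¹) (1 - c)⁻¹) ∧
        z = ∑ i ∈ range q, (x i : ℂ) * κ ^ i} := by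
  ext z
  constructor
  · rintro ⟨a, ha, rfl⟩
    exact exists_Icc_sum_range_eq_signed_tsum hq hκ (by linarith) hc1 hκc ha
  · rintro ⟨x, hx, rfl⟩
    exact exists_signed_tsum_eq_sum_range_of_Icc hq hκ hc hc1 hκc hx

theorem attractor_is_convex_polygon_general
    (ρ : ℝ) (hρ0 : 0 < ρ) (hρ1 : ρ < 1)
    (p q : ℕ) (hq_odd : Odd q)
    (κ : ℂ) (hκ : κ = (ρ : ℂ) * Complex.exp (2 * Real.pi * Complex.I * p / q))
    (β : ℝ) (hβ : β = (ρ ^ q)⁻¹) (hβ2 : β ≤ 2) :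
    Convex ℝ {z : ℂ | ∃ a : ℕ → ℝ, (∀ k, a k = 1 ∨ a k = -1) ∧
        z = ∑' k : ℕ, (a k : ℂ) * κ ^ k} ∧
    {z : ℂ | ∃ a : ℕ → ℝ, (∀ k, a k = 1 ∨ a k = -1) ∧
        z = ∑' k : ℕ, (a k : ℂ) * κ ^ k} =
      {z : ℂ | ∃ x : ℕ → ℝ,
        (∀ i < q, x i ∈ Set.Icc (-(β / (β - 1))) (β / (β - 1))) ∧
        z = ∑ i ∈ Finset.range q, (x i : ℂ) * κ ^ i} := by
  have hq : 0 < q := hq_odd.pos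
  have hc0 : 0 < ρ ^ q := pow_pos hρ0 q
  have hc1 : ρ ^ q < 1 := pow_lt_one₀ hρ0.le hρ1 hq.ne'
  have hc : 1 / 2 ≤ ρ ^ q := by
    rw [hβ, inv_le_comm₀ hc0 two_pos] at hβ2
    linarith
  have hβc : β / (β - 1) = (1 - ρ ^ q)⁻¹ := by
    rw [hβ]
    field_simp [hc0.ne', (sub_pos.mpr hc1).ne']
  have hκ_norm : ‖κ‖ < 1 := hκ ▸ (norm_ofReal_mul_exp_two_pi_I_div hρ0.le p q).trans_lt hρ1
  rw [hβc, setOf_signed_tsum_eq_polygon hq hκ_norm hc hc1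
    (hκ ▸ ofReal_mul_exp_two_pi_I_div_pow ρ p hq.ne')]
  exact ⟨convex_setOf_sum_range_ofReal_mul (convex_Icc _ _) q _, rfl⟩

theorem attractor_is_convex_polygon
    (ρ : ℝ) (hρ0 : 0 < ρ) (hρ1 : ρ < 1)
    (p q : ℕ) (hpq : Nat.Coprime p q) (hq_odd : Odd q)
    (κ : ℂ) (hκ : κ = (ρ : ℂ) * Complex.exp (2 * Real.pi * Complex.I * p / q))
    (hnr : κ.im ≠ 0)
    (β : ℝ) (hβ : β = (ρ ^ q)⁻¹) (hβ2 : β ≤ 2) :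
    Convex ℝ {z : ℂ | ∃ a : ℕ → ℝ, (∀ k, a k = 1 ∨ a k = -1) ∧
        z = ∑' k : ℕ, (a k : ℂ) * κ ^ k} ∧
    {z : ℂ | ∃ a : ℕ → ℝ, (∀ k, a k = 1 ∨ a k = -1) ∧
        z = ∑' k : ℕ, (a k : ℂ) * κ ^ k} =
      {z : ℂ | ∃ x : ℕ → ℝ,
        (∀ i < q, x i ∈ Set.Icc (-(β / (β - 1))) (β / (β - 1))) ∧
        z = ∑ i ∈ Finset.range q, (x i : ℂ) * κ ^ i} :=
  attractor_is_convex_polygon_general ρ hρ0 hρ1 p q hq_odd κ hκ β hβ hβ2
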